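/- arXiv:2508.13133 — 2 statements merged into one kernel-verified Lean document; each statement's English description precedes it below -/
import Mathlib

section
/- Let A be a T-brace and suppose a ∈ ζ_n(⋆,A) for some natural number n. Define a₁ = a and a_{i+1} = a_i ⋆ a_i for all i ≥ 1. Then: (i) br(a) is an ideal of A and br(a) = ⟨a₁⟩ + ⟨a₂⟩ + ⋯ + ⟨a_n⟩; (ii) if the additive group of ζ(⋆,A) is torsion-free, then br(a) = ⟨a₁⟩ ⊕ ⟨a₂⟩ ⊕ ⋯ ⊕ ⟨a_n⟩ (an internal direct sum of additive subgroups). -/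
/-!
Basic theory of left braces (skew left braces of abelian type), following
Dixon–Kurdachenko–Subbotin, "On the structure of braces whose subideals are ideals".
-/

universe u v

/-- A left brace: an abelian group `(A,+)`, a group `(A,·)`, satisfying
`a(b+c) = ab + ac - a`.  (The additive and multiplicative identities then coincide.) -/
class LeftBrace (A : Type u) extends AddCommGroup A, Group A where
  mul_add_eq : ∀ a b c : A, a * (b + c) = a * b + a * c - a

namespace LeftBrace

variable {A : Type u} [LeftBrace A]

/-- The star operation `a ⋆ b = ab - a - b`. -/
def bstar (a b : A) : A := a * b - a - b

/-- A subset of a left brace is a subbrace if it is closed under the additive-group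
and multiplicative-group operations (equivalently, it is a left brace under the
restricted operations). -/
structure IsSubbrace (S : Set A) : Prop where
  zero_mem : (0 : A) ∈ S
  add_mem : ∀ {a b : A}, a ∈ S → b ∈ S → a + b ∈ S
  neg_mem : ∀ {a : A}, a ∈ S → -a ∈ S
  mul_mem : ∀ {a b : A}, a ∈ S → b ∈ S → a * b ∈ S
  inv_mem : ∀ {a : A}, a ∈ S → a⁻¹ ∈ S

/-- `I` is an ideal of the subbrace `J`: `I ⊆ J`, both are subbraces, and
`a ⋆ z, z ⋆ a ∈ I` for all `a ∈ J`, `z ∈ I`. -/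
structure IsIdealIn (I J : Set A) : Prop where
  subset : I ⊆ J
  subbrace : IsSubbrace I
  ambient_subbrace : IsSubbrace J
  star_mem_left : ∀ a ∈ J, ∀ z ∈ I, bstar a z ∈ I
  star_mem_right : ∀ a ∈ J, ∀ z ∈ I, bstar z a ∈ I

/-- `I` is an ideal of the brace `A`. -/
def IsIdeal (I : Set A) : Prop := IsIdealIn I (Set.univ : Set A)

/-- `A` is a T-brace if being an ideal is a transitive relation: an ideal of an
ideal of `A` is an ideal of `A`. -/
def IsTBrace (A : Type u) [LeftBrace A] : Prop :=
  ∀ I J : Set A, IsIdealIn I J → IsIdeal J → IsIdeal I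

/-- The `⋆`-center `ζ(⋆,A) = {a | a ⋆ x = x ⋆ a = 0 for all x}`. -/
def starCenter (A : Type u) [LeftBrace A] : Set A :=
  {a : A | ∀ x : A, bstar a x = 0 ∧ bstar x a = 0}

/-- The preimage in `A` of the `⋆`-center of the quotient of `A` by (the ideal) `S`:
`a` belongs to it iff `a ⋆ x ∈ S` and `x ⋆ a ∈ S` for every `x ∈ A`. -/
def nextCenter (A : Type u) [LeftBrace A] (S : Set A) : Set A :=
  {a : A | ∀ x : A, bstar a x ∈ S ∧ bstar x a ∈ S}

/-- The upper `⋆`-central series, indexed by naturals: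
`ζ₀(⋆,A) = 0` and `ζ_{n+1}(⋆,A)/ζ_n(⋆,A) = ζ(⋆, A/ζ_n(⋆,A))`. -/
def zetaNat (A : Type u) [LeftBrace A] : ℕ → Set A
  | 0 => ({0} : Set A)
  | n + 1 => nextCenter A (zetaNat A n)

/-- The upper `⋆`-central series, indexed by ordinals (unions at limit ordinals). -/
noncomputable def zetaOrd (A : Type u) [LeftBrace A] (o : Ordinal.{v}) : Set A :=
  Ordinal.limitRecOn o (({0} : Set A))
    (fun _ ih => nextCenter A ih)
    (fun o _ ih => ⋃ (o' : Ordinal) (h : o' < o), ih o' h)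

/-- The upper `⋆`-hypercenter `ζ_∞(⋆,A)`: the final (stable) term of the upper
`⋆`-central series, i.e. the union of all its terms. -/
noncomputable def starHypercenter (A : Type u) [LeftBrace A] : Set A :=
  ⋃ o : Ordinal.{u}, zetaOrd A o

/-- `A` is `⋆`-hypercentral if `A = ζ_γ(⋆,A)` for some ordinal `γ`. -/
def IsStarHypercentral (A : Type u) [LeftBrace A] : Prop :=
  ∃ γ : Ordinal.{u}, zetaOrd A γ = (Set.univ : Set A)

/-- `K ⋆ L`: the additive subgroup of `(A,+)` generated by all `x ⋆ y`, `x ∈ K`, `y ∈ L`. -/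
def setStar (K L : Set A) : AddSubgroup A :=
  AddSubgroup.closure {z : A | ∃ x ∈ K, ∃ y ∈ L, z = bstar x y}

/-- `rightStarSeries A n = A^{(n+1)}`, where `A^{(1)} = A` and `A^{(n+1)} = A^{(n)} ⋆ A`. -/
def rightStarSeries (A : Type u) [LeftBrace A] : ℕ → Set A
  | 0 => (Set.univ : Set A)
  | n + 1 => ((setStar (rightStarSeries A n) (Set.univ : Set A) : AddSubgroup A) : Set A)

/-- `leftStarSeries A n = A^{n+1}`, where `A^1 = A` and `A^{n+1} = A ⋆ A^n`. -/
def leftStarSeries (A : Type u) [LeftBrace A] : ℕ → Set A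
  | 0 => (Set.univ : Set A)
  | n + 1 => ((setStar (Set.univ : Set A) (leftStarSeries A n) : AddSubgroup A) : Set A)

/-- `A` is Smoktunowicz-nilpotent if `A^{(n)} = A^k = 0` for some naturals `n, k`. -/
def IsSmoktunowiczNilpotent (A : Type u) [LeftBrace A] : Prop :=
  ∃ n k : ℕ, rightStarSeries A n = ({0} : Set A) ∧ leftStarSeries A k = ({0} : Set A)

/-- The subbrace generated by a subset `M`: the intersection of all subbraces containing `M`. -/
def braceClosure (M : Set A) : Set A := ⋂₀ {S : Set A | IsSubbrace S ∧ M ⊆ S}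

end LeftBrace

open LeftBrace in
/-- The sequence `a₁ = a`, `a_{i+1} = a_i ⋆ a_i` (0-indexed: `aSeq a i = a_{i+1}`). -/
def LeftBrace.aSeq {A : Type u} [LeftBrace A] (a : A) : ℕ → A
  | 0 => a
  | i + 1 => bstar (LeftBrace.aSeq a i) (LeftBrace.aSeq a i)

/-!
Modulo an ideal `B` containing `a ⋆ a`, the powers of `a` are its multiples, which makes
`⟨a⟩ + B` closed under the brace operations. If moreover `a` lies in the `(m+1)`-st term `ζ_{m+1}`
of the upper `⋆`-central series of `A` over `B`, then
`⟨a⟩ + B ⊴ ⟨a⟩ + ζ₁ ⊴ ⋯ ⊴ ⟨a⟩ + ζ_m ⊴ A` is a chain of subideals, which collapses in a T-brace.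
Taking `B = ⟨a₂⟩ + ⋯ + ⟨a_n⟩`, an ideal by induction on `n` (applied to `a₂ = a ⋆ a ∈ ζ_{n-1}`),
shows that `⟨a₁⟩ + ⋯ + ⟨a_n⟩` is an ideal, hence equal to `br(a)`.

If `ζ(⋆,A)` is torsion-free, so is every factor `ζ_{l+1}/ζ_l`, because `z ↦ z ⋆ x` is additive
modulo `ζ_l` on `ζ_{l+2}`. In a relation `∑ cᵢ aᵢ = 0` with `a ∈ ζ_{n+1}`, the term `c₁ a` lies in
`ζ_n`; so either `c₁ a = 0`, or `a ∈ ζ_n` and then `a_{n+1} = 0`. Either way induction applies.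
-/

lemma iSupIndep_of_sum_eq_zero {ι M : Type*} [Fintype ι] [AddCommGroup M]
    {p : ι → AddSubgroup M} (h : ∀ w : ι → M, (∀ i, w i ∈ p i) → ∑ i, w i = 0 → ∀ i, w i = 0) :
    iSupIndep p := by
  classical
  rw [← iSupIndep_map_orderIso_iff AddSubgroup.toIntSubmodule,
    iSupIndep_iff_finsetSum_eq_zero_imp_eq_zero]
  intro s v hv hsum i hi
  have := h (fun j => if j ∈ s then v j else 0)
    (fun j => by split_ifs with hj; exacts [hv j hj, zero_mem _])
    (by rw [Finset.sum_ite_mem, Finset.univ_inter, hsum]) i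
  simpa [hi] using this

namespace LeftBrace

variable {A : Type u} [LeftBrace A]

lemma zero_eq_one : (0 : A) = 1 := by
  have h := mul_add_eq (1 : A) 0 0
  rw [add_zero, one_mul, add_zero, zero_sub, eq_comm, neg_eq_zero] at h
  exact h.symm

def lam (x : A) : A →+ A where
  toFun y := x * y - x
  map_zero' := by rw [sub_eq_zero, zero_eq_one, mul_one]
  map_add' y z := by simp only [mul_add_eq]; abel

lemma lam_apply (x y : A) : lam x y = x * y - x := rfl

lemma lam_eq_bstar_add (x y : A) : lam x y = bstar x y + y := by
  rw [lam_apply, bstar]; abel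

lemma bstar_eq_lam_sub (x y : A) : bstar x y = lam x y - y := by
  rw [lam_eq_bstar_add]; abel

lemma mul_eq_bstar_add_add (x y : A) : x * y = bstar x y + x + y := by
  rw [bstar]; abel

lemma lam_mul (x y z : A) : lam (x * y) z = lam x (lam y z) := by
  rw [lam_apply, lam_apply y, map_sub, lam_apply, lam_apply, mul_assoc]; abel

lemma lam_one (y : A) : lam 1 y = y := by
  rw [lam_apply, one_mul, ← zero_eq_one, sub_zero]

lemma lam_inv_lam (x y : A) : lam x⁻¹ (lam x y) = y := by
  rw [← lam_mul, inv_mul_cancel, lam_one]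

lemma lam_lam_inv (x y : A) : lam x (lam x⁻¹ y) = y := by
  rw [← lam_mul, mul_inv_cancel, lam_one]

lemma add_eq_mul_lam (x y : A) : x + y = x * lam x⁻¹ y := by
  rw [mul_eq_bstar_add_add, bstar_eq_lam_sub, lam_lam_inv]; abel

lemma bstar_inv_self (x : A) : bstar x⁻¹ x = -(x⁻¹ + x) := by
  rw [bstar, inv_mul_cancel, ← zero_eq_one]; abel

lemma bstar_zero_left (x : A) : bstar 0 x = 0 := by
  rw [bstar, zero_eq_one, one_mul, ← zero_eq_one]; abel

lemma bstar_zero_right (x : A) : bstar x 0 = 0 := by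
  rw [bstar_eq_lam_sub, map_zero, sub_zero]

lemma bstar_add_right (x y z : A) : bstar x (y + z) = bstar x y + bstar x z := by
  simp only [bstar_eq_lam_sub, map_add]; abel

lemma bstar_zsmul_right (x y : A) (k : ℤ) : bstar x (k • y) = k • bstar x y := by
  simp only [bstar_eq_lam_sub, map_zsmul, smul_sub]

lemma mul_bstar (x y z : A) : bstar (x * y) z = bstar x (bstar y z) + bstar y z + bstar x z := by
  simp only [bstar_eq_lam_sub, lam_mul, map_sub]; abel

lemma add_bstar (x y z : A) :
    bstar (x + y) z = bstar x (bstar (lam x⁻¹ y) z) + bstar (lam x⁻¹ y) z + bstar x z := by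
  rw [add_eq_mul_lam, mul_bstar]

lemma inv_bstar (x y : A) : bstar x⁻¹ y = -lam x⁻¹ (bstar x y) := by
  have h := mul_bstar x⁻¹ x y
  rw [inv_mul_cancel, ← zero_eq_one, bstar_zero_left, ← lam_eq_bstar_add] at h
  rw [eq_neg_iff_add_eq_zero, add_comm, h]

lemma bstar_inv_right (x y : A) : bstar x y⁻¹ = -bstar x y - bstar x (bstar y y⁻¹) := by
  have h := congrArg (bstar x) (mul_eq_bstar_add_add y y⁻¹)
  rw [mul_inv_cancel, ← zero_eq_one, bstar_zero_right, bstar_add_right, bstar_add_right] at h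
  exact sub_eq_zero.mp (by rw [h]; abel)

lemma inv_eq_lam_sub (x : A) : x⁻¹ = lam x⁻¹ (bstar x x) - x :=
  eq_sub_of_add_eq (neg_inj.mp ((bstar_inv_self x).symm.trans (inv_bstar x x)))

lemma isSubbrace_univ : IsSubbrace (Set.univ : Set A) :=
  ⟨trivial, fun _ _ => trivial, fun _ => trivial, fun _ _ => trivial, fun _ => trivial⟩

def IsSubbrace.toAddSubgroup {S : Set A} (hS : IsSubbrace S) : AddSubgroup A where
  carrier := S
  zero_mem' := hS.zero_mem
  add_mem' := hS.add_mem
  neg_mem' := hS.neg_mem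

lemma IsSubbrace.bstar_mem {S : Set A} (hS : IsSubbrace S) {x y : A} (hx : x ∈ S) (hy : y ∈ S) :
    bstar x y ∈ S := by
  have h : bstar x y = x * y + -x + -y := by rw [bstar]; abel
  rw [h]
  exact hS.add_mem (hS.add_mem (hS.mul_mem hx hy) (hS.neg_mem hx)) (hS.neg_mem hy)

lemma IsSubbrace.aSeq_mem {S : Set A} (hS : IsSubbrace S) {a : A} (ha : a ∈ S) (i : ℕ) :
    aSeq a i ∈ S := by
  induction i with
  | zero => exact ha
  | succ i ih => exact hS.bstar_mem ih ih

lemma aSeq_succ' (a : A) (i : ℕ) : aSeq a (i + 1) = aSeq (bstar a a) i := by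
  induction i with
  | zero => rfl
  | succ i ih => exact congrArg (fun x => bstar x x) ih

namespace IsIdeal

lemma of_bstar_mem {I : Set A} (zero_mem : (0 : A) ∈ I)
    (add_mem : ∀ {x y : A}, x ∈ I → y ∈ I → x + y ∈ I) (neg_mem : ∀ {x : A}, x ∈ I → -x ∈ I)
    (bstar_mem_left : ∀ (x : A) {z : A}, z ∈ I → bstar x z ∈ I)
    (bstar_mem_right : ∀ (x : A) {z : A}, z ∈ I → bstar z x ∈ I) : IsIdeal I where
  subset := Set.subset_univ I
  subbrace :=
    { zero_mem, add_mem, neg_mem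
      mul_mem := fun {x _} hx hy => by
        rw [mul_eq_bstar_add_add]; exact add_mem (add_mem (bstar_mem_left x hy) hx) hy
      inv_mem := fun {x} hx => by
        have h : x⁻¹ = -bstar x⁻¹ x + -x := by rw [bstar_inv_self]; abel
        rw [h]; exact add_mem (neg_mem (bstar_mem_left x⁻¹ hx)) (neg_mem hx) }
  ambient_subbrace := isSubbrace_univ
  star_mem_left x _ _ hz := bstar_mem_left x hz
  star_mem_right x _ _ hz := bstar_mem_right x hz

variable {I : Set A} (hI : IsIdeal I)
include hI

lemma zero_mem : (0 : A) ∈ I := hI.subbrace.zero_mem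

lemma add_mem {x y : A} (hx : x ∈ I) (hy : y ∈ I) : x + y ∈ I := hI.subbrace.add_mem hx hy

lemma neg_mem {x : A} (hx : x ∈ I) : -x ∈ I := hI.subbrace.neg_mem hx

lemma sub_mem {x y : A} (hx : x ∈ I) (hy : y ∈ I) : x - y ∈ I :=
  hI.subbrace.toAddSubgroup.sub_mem hx hy

lemma zsmul_mem {x : A} (hx : x ∈ I) (k : ℤ) : k • x ∈ I :=
  hI.subbrace.toAddSubgroup.zsmul_mem hx k

lemma bstar_mem_left (x : A) {z : A} (hz : z ∈ I) : bstar x z ∈ I :=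
  hI.star_mem_left x trivial z hz

lemma bstar_mem_right (x : A) {z : A} (hz : z ∈ I) : bstar z x ∈ I :=
  hI.star_mem_right x trivial z hz

lemma lam_mem (x : A) {z : A} (hz : z ∈ I) : lam x z ∈ I := by
  rw [lam_eq_bstar_add]; exact hI.add_mem (hI.bstar_mem_left x hz) hz

lemma lam_mem_iff (x : A) {z : A} : lam x z ∈ I ↔ z ∈ I :=
  ⟨fun h => lam_inv_lam x z ▸ hI.lam_mem x⁻¹ h, hI.lam_mem x⟩

lemma add_mem_iff_left {x y : A} (hy : y ∈ I) : x + y ∈ I ↔ x ∈ I :=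
  hI.subbrace.toAddSubgroup.add_mem_cancel_right hy

lemma subset_nextCenter : I ⊆ nextCenter A I :=
  fun _ hz x => ⟨hI.bstar_mem_right x hz, hI.bstar_mem_left x hz⟩

end IsIdeal

lemma isIdeal_singleton_zero : IsIdeal ({0} : Set A) :=
  .of_bstar_mem rfl (by rintro _ _ rfl rfl; exact add_zero 0) (by rintro _ rfl; exact neg_zero)
    (by rintro x _ rfl; exact bstar_zero_right x) (by rintro x _ rfl; exact bstar_zero_left x)

lemma nextCenter_mono : Monotone (nextCenter A) :=
  fun _ _ h _ hz x => ⟨h (hz x).1, h (hz x).2⟩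

lemma bstar_add_sub_bstar_mem {I N : Set A} (hI : IsIdeal I) (hN : IsIdeal N)
    (hNI : N ⊆ nextCenter A I) {d : A} (hd : d ∈ N) (w x : A) :
    bstar (w + d) x - bstar w x ∈ I := by
  have hd' := hNI (hN.lam_mem w⁻¹ hd) x
  rw [add_bstar, add_sub_cancel_right]
  exact hI.add_mem (hI.bstar_mem_left w hd'.1) hd'.1

lemma isIdeal_nextCenter {I : Set A} (hI : IsIdeal I) : IsIdeal (nextCenter A I) := by
  set N := nextCenter A I
  have mul_mem {z w : A} (hz : z ∈ N) (hw : w ∈ N) : z * w ∈ N := by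
    intro x
    constructor
    · rw [mul_bstar]
      exact hI.add_mem (hI.add_mem (hI.bstar_mem_left z (hw x).1) (hw x).1) (hz x).1
    · rw [mul_eq_bstar_add_add, bstar_add_right, bstar_add_right]
      exact hI.add_mem (hI.add_mem (hI.bstar_mem_left x (hz w).1) (hz x).2) (hw x).2
  have inv_mem {z : A} (hz : z ∈ N) : z⁻¹ ∈ N := by
    intro x
    constructor
    · rw [inv_bstar]; exact hI.neg_mem (hI.lam_mem _ (hz x).1)
    · rw [bstar_inv_right]
      exact hI.sub_mem (hI.neg_mem (hz x).2) (hI.bstar_mem_left x (hz _).1)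
  have add_mem_of_mem {w d : A} (hw : w ∈ N) (hd : d ∈ I) : w + d ∈ N := by
    intro x
    constructor
    · rw [← sub_add_cancel (bstar (w + d) x) (bstar w x)]
      exact hI.add_mem (bstar_add_sub_bstar_mem hI hI hI.subset_nextCenter hd w x) (hw x).1
    · rw [bstar_add_right]; exact hI.add_mem (hw x).2 (hI.bstar_mem_left x hd)
  -- `z + w = z · (w + z⁻¹ ⋆ w)` and `-z = z⁻¹ + z⁻¹ ⋆ z`, with `z⁻¹ ⋆ w, z⁻¹ ⋆ z ∈ I`
  refine .of_bstar_mem (fun x => ?_) (fun {z w} hz hw => ?_) (fun {z} hz => ?_)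
    (fun x _ hz => hI.subset_nextCenter (hz x).2) (fun x _ hz => hI.subset_nextCenter (hz x).1)
  · rw [bstar_zero_left, bstar_zero_right]; exact ⟨hI.zero_mem, hI.zero_mem⟩
  · rw [add_eq_mul_lam, lam_eq_bstar_add, add_comm]
    exact mul_mem hz (add_mem_of_mem hw (hw z⁻¹).2)
  · have h : -z = z⁻¹ + bstar z⁻¹ z := by rw [bstar_inv_self]; abel
    rw [h]; exact add_mem_of_mem (inv_mem hz) (hz z⁻¹).2

lemma isIdeal_iterate_nextCenter {B : Set A} (hB : IsIdeal B) (n : ℕ) :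
    IsIdeal ((nextCenter A)^[n] B) := by
  induction n with
  | zero => exact hB
  | succ n ih => rw [Function.iterate_succ_apply']; exact isIdeal_nextCenter ih

lemma zetaNat_eq_iterate (n : ℕ) : zetaNat A n = (nextCenter A)^[n] {0} := by
  induction n with
  | zero => rfl
  | succ n ih => rw [Function.iterate_succ_apply', ← ih]; rfl

lemma isIdeal_zetaNat (n : ℕ) : IsIdeal (zetaNat A n) := by
  rw [zetaNat_eq_iterate]; exact isIdeal_iterate_nextCenter isIdeal_singleton_zero n

lemma IsTBrace.isIdeal_zero_of_isIdealIn_succ (hT : IsTBrace A) {C : ℕ → Set A}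
    (hC : ∀ i, IsIdealIn (C i) (C (i + 1))) (m : ℕ) (hm : IsIdeal (C m)) : IsIdeal (C 0) := by
  induction m generalizing C with
  | zero => exact hm
  | succ m ih => exact hT _ _ (hC 0) (ih (C := fun i => C (i + 1)) (fun i => hC (i + 1)) hm)

section ZMultiplesAdd

open Pointwise AddSubgroup

variable {B I : Set A} {a : A}

/-- Modulo `B`, `a ⋆ a = 0` means `a · a = a + a`, so the powers of `a` are its multiples. -/
lemma zpow_sub_zsmul_mem (hB : IsIdeal B) (haa : bstar a a ∈ B) (k : ℤ) : a ^ k - k • a ∈ B := by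
  have step (k : ℤ) : a ^ (k + 1) - (k + 1) • a ∈ B ↔ a ^ k - k • a ∈ B := by
    have h : a ^ (k + 1) - (k + 1) • a = lam a (a ^ k - k • a) + k • bstar a a := by
      rw [map_sub, map_zsmul, lam_apply, lam_eq_bstar_add, mul_self_zpow]; module
    rw [h, hB.add_mem_iff_left (hB.zsmul_mem haa k), hB.lam_mem_iff]
  induction k using Int.induction_on with
  | zero => rw [zpow_zero, zero_zsmul, sub_zero, ← zero_eq_one]; exact hB.zero_mem
  | succ k ih => exact (step k).2 ih
  | pred k ih => exact (step _).1 (by rwa [sub_add_cancel])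

lemma bstar_zsmul_self_mem (hB : IsIdeal B) (haa : bstar a a ∈ B) (k : ℤ) :
    bstar (k • a) a ∈ B := by
  have hd : k • a - a ^ k ∈ B := by
    rw [← neg_sub]; exact hB.neg_mem (zpow_sub_zsmul_mem hB haa k)
  have hpow : bstar (a ^ k) a = (a ^ (k + 1) - (k + 1) • a) - (a ^ k - k • a) := by
    rw [bstar, ← zpow_add_one]; module
  have h := bstar_add_sub_bstar_mem hB hB hB.subset_nextCenter hd (a ^ k) a
  rw [add_sub_cancel] at h
  rw [← sub_add_cancel (bstar (k • a) a) (bstar (a ^ k) a)]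
  refine hB.add_mem h ?_
  rw [hpow]
  exact hB.sub_mem (zpow_sub_zsmul_mem hB haa _) (zpow_sub_zsmul_mem hB haa k)

lemma bstar_mem_of_mem_zmultiples_add_nextCenter (hB : IsIdeal B) (haa : bstar a a ∈ B)
    (hI : IsIdeal I) (hBI : B ⊆ I) {x y : A} (hx : x ∈ (zmultiples a : Set A) + nextCenter A I)
    (hy : y ∈ (zmultiples a : Set A) + nextCenter A I) : bstar x y ∈ I := by
  obtain ⟨_, ⟨k, rfl⟩, s, hs, rfl⟩ := hx
  obtain ⟨_, ⟨l, rfl⟩, t, ht, rfl⟩ := hy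
  have hsa : bstar (k • a + s) a - bstar (k • a) a ∈ I :=
    bstar_add_sub_bstar_mem hI (isIdeal_nextCenter hI) subset_rfl hs _ _
  have hxa : bstar (k • a + s) a ∈ I := by
    rw [← sub_add_cancel (bstar (k • a + s) a) (bstar (k • a) a)]
    exact hI.add_mem hsa (hBI (bstar_zsmul_self_mem hB haa k))
  rw [bstar_add_right, bstar_zsmul_right]
  exact hI.add_mem (hI.zsmul_mem hxa l) (ht _).2

lemma isSubbrace_zmultiples_add (hB : IsIdeal B) (haa : bstar a a ∈ B) (hI : IsIdeal I)
    (hBI : B ⊆ I) : IsSubbrace ((zmultiples a : Set A) + I) := by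
  set C := (zmultiples a : Set A) + I
  have hIC : I ⊆ C := Set.subset_add_right _ (zero_mem _)
  have hCN : C ⊆ (zmultiples a : Set A) + nextCenter A I :=
    Set.add_subset_add_left hI.subset_nextCenter
  have bstar_mem {x y : A} (hx : x ∈ C) (hy : y ∈ C) : bstar x y ∈ I :=
    bstar_mem_of_mem_zmultiples_add_nextCenter hB haa hI hBI (hCN hx) (hCN hy)
  have add_mem {x y : A} (hx : x ∈ C) (hy : y ∈ C) : x + y ∈ C := by
    obtain ⟨_, ⟨k, rfl⟩, s, hs, rfl⟩ := hx
    obtain ⟨_, ⟨l, rfl⟩, t, ht, rfl⟩ := hy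
    exact ⟨(k + l) • a, ⟨k + l, rfl⟩, s + t, hI.add_mem hs ht, by module⟩
  have neg_mem {x : A} (hx : x ∈ C) : -x ∈ C := by
    obtain ⟨_, ⟨k, rfl⟩, s, hs, rfl⟩ := hx
    exact ⟨(-k) • a, ⟨-k, rfl⟩, -s, hI.neg_mem hs, by module⟩
  refine ⟨hIC hI.zero_mem, add_mem, neg_mem, fun {x y} hx hy => ?_, fun {x} hx => ?_⟩
  · rw [mul_eq_bstar_add_add, add_assoc, add_comm]
    exact add_mem (add_mem hx hy) (hIC (bstar_mem hx hy))
  · rw [inv_eq_lam_sub, sub_eq_add_neg]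
    exact add_mem (hIC (hI.lam_mem _ (bstar_mem hx hx))) (neg_mem hx)

lemma isIdealIn_zmultiples_add (hB : IsIdeal B) (haa : bstar a a ∈ B) (hI : IsIdeal I)
    (hBI : B ⊆ I) :
    IsIdealIn ((zmultiples a : Set A) + I) ((zmultiples a : Set A) + nextCenter A I) where
  subset := Set.add_subset_add_left hI.subset_nextCenter
  subbrace := isSubbrace_zmultiples_add hB haa hI hBI
  ambient_subbrace :=
    isSubbrace_zmultiples_add hB haa (isIdeal_nextCenter hI) (hBI.trans hI.subset_nextCenter)
  star_mem_left _ hx _ hz := Set.subset_add_right _ (zero_mem _)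
    (bstar_mem_of_mem_zmultiples_add_nextCenter hB haa hI hBI hx
      (Set.add_subset_add_left hI.subset_nextCenter hz))
  star_mem_right _ hx _ hz := Set.subset_add_right _ (zero_mem _)
    (bstar_mem_of_mem_zmultiples_add_nextCenter hB haa hI hBI
      (Set.add_subset_add_left hI.subset_nextCenter hz) hx)

lemma isIdeal_zmultiples_add_of_mem_nextCenter (hI : IsIdeal I) (ha : a ∈ nextCenter A I) :
    IsIdeal ((zmultiples a : Set A) + I) := by
  have hCN : (zmultiples a : Set A) + I ⊆ nextCenter A I := by
    rintro _ ⟨_, ⟨k, rfl⟩, s, hs, rfl⟩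
    exact (isIdeal_nextCenter hI).add_mem ((isIdeal_nextCenter hI).zsmul_mem ha k)
      (hI.subset_nextCenter hs)
  have hIC : I ⊆ (zmultiples a : Set A) + I := Set.subset_add_right _ (zero_mem _)
  exact ⟨Set.subset_univ _, isSubbrace_zmultiples_add hI (ha a).1 hI subset_rfl,
    isSubbrace_univ, fun x _ _ hz => hIC (hCN hz x).2, fun x _ _ hz => hIC (hCN hz x).1⟩

theorem IsTBrace.isIdeal_zmultiples_add (hT : IsTBrace A) (hB : IsIdeal B) (haa : bstar a a ∈ B)
    {m : ℕ} (ha : a ∈ (nextCenter A)^[m + 1] B) : IsIdeal ((zmultiples a : Set A) + B) := by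
  have hZ := isIdeal_iterate_nextCenter hB
  have hBZ (i : ℕ) : B ⊆ (nextCenter A)^[i] B :=
    nextCenter_mono.monotone_iterate_of_le_map hB.subset_nextCenter (Nat.zero_le i)
  refine hT.isIdeal_zero_of_isIdealIn_succ
    (C := fun i => (zmultiples a : Set A) + (nextCenter A)^[i] B) (fun i => ?_) m ?_
  · rw [Function.iterate_succ_apply']; exact isIdealIn_zmultiples_add hB haa (hZ i) (hBZ i)
  · rw [Function.iterate_succ_apply'] at ha
    exact isIdeal_zmultiples_add_of_mem_nextCenter (hZ m) ha

end ZMultiplesAdd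

section BraceClosure

open AddSubgroup

lemma iSup_zmultiples_aSeq_succ (a : A) (n : ℕ) :
    ⨆ i : Fin (n + 1), zmultiples (aSeq a i) =
      zmultiples a ⊔ ⨆ i : Fin n, zmultiples (aSeq (bstar a a) i) := by
  apply le_antisymm
  · refine iSup_le fun i => ?_
    induction i using Fin.cases with
    | zero => exact le_sup_left
    | succ i =>
      rw [Fin.val_succ, aSeq_succ']
      exact le_sup_of_le_right (le_iSup (fun i : Fin n => zmultiples (aSeq (bstar a a) i)) i)
  · refine sup_le (le_iSup_of_le 0 le_rfl) (iSup_le fun i => le_iSup_of_le i.succ ?_)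
    rw [Fin.val_succ, aSeq_succ']

lemma mem_iSup_zmultiples_aSeq_self {n : ℕ} {a : A} (ha : a ∈ zetaNat A n) :
    a ∈ ⨆ i : Fin n, zmultiples (aSeq a i) := by
  cases n with
  | zero => rw [Set.mem_singleton_iff.mp ha]; exact zero_mem _
  | succ n => exact mem_iSup_of_mem 0 (mem_zmultiples a)

theorem IsTBrace.isIdeal_iSup_zmultiples_aSeq (hT : IsTBrace A) {n : ℕ} {a : A}
    (ha : a ∈ zetaNat A n) :
    IsIdeal ((⨆ i : Fin n, zmultiples (aSeq a i) : AddSubgroup A) : Set A) := by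
  induction n generalizing a with
  | zero => rw [iSup_of_empty, coe_bot]; exact isIdeal_singleton_zero
  | succ n ih =>
    have haa : bstar a a ∈ zetaNat A n := (ha a).1
    set H := ⨆ i : Fin n, zmultiples (aSeq (bstar a a) i)
    have hzeta : zetaNat A (n + 1) ⊆ (nextCenter A)^[n + 1] H := by
      rw [zetaNat_eq_iterate]
      exact nextCenter_mono.iterate (n + 1) (Set.singleton_subset_iff.2 (zero_mem H))
    rw [iSup_zmultiples_aSeq_succ, add_normal]
    exact hT.isIdeal_zmultiples_add (ih haa) (mem_iSup_zmultiples_aSeq_self haa) (hzeta ha)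

lemma braceClosure_singleton_eq_iSup_zmultiples_aSeq {n : ℕ} {a : A}
    (hS : IsSubbrace ((⨆ i : Fin n, zmultiples (aSeq a i) : AddSubgroup A) : Set A))
    (ha : a ∈ ⨆ i : Fin n, zmultiples (aSeq a i)) :
    braceClosure {a} = ((⨆ i : Fin n, zmultiples (aSeq a i) : AddSubgroup A) : Set A) :=
  subset_antisymm (Set.sInter_subset_of_mem ⟨hS, Set.singleton_subset_iff.2 ha⟩)
    (Set.subset_sInter fun _ ⟨hT, haT⟩ =>
      (SetLike.coe_subset_coe (T := hT.toAddSubgroup)).2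
        (iSup_le fun i => zmultiples_le.2 (hT.aSeq_mem (haT rfl) i)))

end BraceClosure

lemma aSeq_eq_zero_of_mem_zetaNat {n : ℕ} {a : A} (ha : a ∈ zetaNat A n) : aSeq a n = 0 := by
  induction n generalizing a with
  | zero => exact ha
  | succ n ih => rw [aSeq_succ']; exact ih (ha a).1

lemma bstar_add_sub_bstar_sub_bstar_mem {I : Set A} (hI : IsIdeal I) (u : A) {v : A}
    (hv : v ∈ nextCenter A (nextCenter A I)) (x : A) :
    bstar (u + v) x - bstar u x - bstar v x ∈ I := by
  have hN := isIdeal_nextCenter hI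
  have hd : bstar u⁻¹ v ∈ nextCenter A I := (hv u⁻¹).2
  have hw : lam u⁻¹ v = v + bstar u⁻¹ v := by rw [lam_eq_bstar_add, add_comm]
  have hwx : bstar (lam u⁻¹ v) x - bstar v x ∈ I := by
    rw [hw]; exact bstar_add_sub_bstar_mem hI hN subset_rfl hd v x
  have hu : bstar u (bstar (lam u⁻¹ v) x) ∈ I :=
    (((isIdeal_nextCenter hN).lam_mem u⁻¹ hv x).1 u).2
  rw [add_bstar]
  convert hI.add_mem hu hwx using 1
  abel

lemma bstar_zsmul_sub_zsmul_bstar_mem {I : Set A} (hI : IsIdeal I) {z : A}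
    (hz : z ∈ nextCenter A (nextCenter A I)) (k : ℤ) (x : A) :
    bstar (k • z) x - k • bstar z x ∈ I := by
  have step (k : ℤ) :
      bstar ((k + 1) • z) x - (k + 1) • bstar z x ∈ I ↔ bstar (k • z) x - k • bstar z x ∈ I := by
    have h : bstar ((k + 1) • z) x - (k + 1) • bstar z x = (bstar (k • z) x - k • bstar z x) +
        (bstar (k • z + z) x - bstar (k • z) x - bstar z x) := by
      rw [add_zsmul, add_zsmul, one_zsmul, one_zsmul]; abel
    rw [h, hI.add_mem_iff_left (bstar_add_sub_bstar_sub_bstar_mem hI _ hz x)]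
  induction k using Int.induction_on with
  | zero => rw [zero_zsmul, zero_zsmul, bstar_zero_left, sub_zero]; exact hI.zero_mem
  | succ k ih => exact (step k).2 ih
  | pred k ih => exact (step _).1 (by rwa [sub_add_cancel])

section TorsionFree

open AddSubgroup

variable (htf : ∀ z ∈ starCenter A, z ≠ 0 → ¬ IsOfFinAddOrder z)
include htf

lemma mem_zetaNat_of_zsmul_mem {l : ℕ} {z : A} (hz : z ∈ zetaNat A (l + 1)) {k : ℤ} (hk : k ≠ 0)
    (hkz : k • z ∈ zetaNat A l) : z ∈ zetaNat A l := by
  induction l generalizing z with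
  | zero =>
    by_contra hz0
    exact htf z hz hz0 (isOfFinAddOrder_iff_zsmul_eq_zero.2 ⟨k, hk, hkz⟩)
  | succ l ih =>
    refine fun x => ⟨ih (hz x).1 ?_, ih (hz x).2 ?_⟩
    · rw [← sub_sub_cancel (bstar (k • z) x) (k • bstar z x)]
      exact (isIdeal_zetaNat l).sub_mem (hkz x).1
        (bstar_zsmul_sub_zsmul_bstar_mem (isIdeal_zetaNat l) hz k x)
    · rw [← bstar_zsmul_right]; exact (hkz x).2

lemma eq_zero_of_sum_eq_zero_of_mem_zmultiples_aSeq {n : ℕ} {a : A} (ha : a ∈ zetaNat A n)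
    (w : Fin n → A) (hw : ∀ i : Fin n, w i ∈ zmultiples (aSeq a i)) (hsum : ∑ i, w i = 0)
    (i : Fin n) : w i = 0 := by
  induction n generalizing a with
  | zero => exact i.elim0
  | succ n ih =>
    by_cases haN : a ∈ zetaNat A n
    · have hlast : w (Fin.last n) = 0 := by
        simpa [aSeq_eq_zero_of_mem_zetaNat haN] using hw (Fin.last n)
      rw [Fin.sum_univ_castSucc, hlast, add_zero] at hsum
      induction i using Fin.lastCases with
      | last => exact hlast
      | cast i => exact ih haN (fun j => w j.castSucc) (fun j => hw j.castSucc) hsum i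
    · have haa : bstar a a ∈ zetaNat A n := (ha a).1
      have hw' (j : Fin n) : w j.succ ∈ zmultiples (aSeq (bstar a a) j) := by
        simpa [aSeq_succ'] using hw j.succ
      set Z := (isIdeal_zetaNat (A := A) n).subbrace.toAddSubgroup
      have htail : ∑ j : Fin n, w j.succ ∈ Z :=
        Z.sum_mem fun j _ => zmultiples_le.2 ((isIdeal_zetaNat n).subbrace.aSeq_mem haa j) (hw' j)
      rw [Fin.sum_univ_succ] at hsum
      obtain ⟨k, hk⟩ := mem_zmultiples_iff.1 (hw 0)
      have hk0 : k = 0 := by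
        by_contra hk0
        refine haN (mem_zetaNat_of_zsmul_mem htf ha hk0 ?_)
        rw [show k • a = w 0 from hk, eq_neg_of_add_eq_zero_left hsum]
        exact Z.neg_mem htail
      have h0 : w 0 = 0 := by rw [← hk, hk0, zero_zsmul]
      rw [h0, zero_add] at hsum
      induction i using Fin.cases with
      | zero => exact h0
      | succ i => exact ih haa (fun j => w j.succ) hw' hsum i

end TorsionFree

end LeftBrace

open LeftBrace in
/-- **Lemma (extra2).** Let `A` be a T-brace and `a ∈ ζ_n(⋆,A)`; set `a₁ = a`,
`a_{i+1} = a_i ⋆ a_i`.  Then (i) `br(a)` is an ideal of `A` and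
`br(a) = ⟨a₁⟩ + ⟨a₂⟩ + ⋯ + ⟨a_n⟩`; (ii) if the additive group of `ζ(⋆,A)` is
torsion-free, then this sum is direct: `br(a) = ⟨a₁⟩ ⊕ ⟨a₂⟩ ⊕ ⋯ ⊕ ⟨a_n⟩`. -/
theorem braceClosure_eq_sum_zmultiples_aSeq
    {A : Type u} [LeftBrace A] (hT : IsTBrace A) (n : ℕ) (a : A)
    (ha : a ∈ zetaNat A n) :
    (IsIdeal (braceClosure {a}) ∧
      braceClosure {a} =
        ((⨆ i : Fin n, AddSubgroup.zmultiples (aSeq a i.1) : AddSubgroup A) : Set A)) ∧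
    ((∀ z ∈ starCenter A, z ≠ 0 → ¬ IsOfFinAddOrder z) →
      iSupIndep (fun i : Fin n => AddSubgroup.zmultiples (aSeq a i.1))) := by
  have hideal := hT.isIdeal_iSup_zmultiples_aSeq ha
  have hclosure := braceClosure_singleton_eq_iSup_zmultiples_aSeq hideal.subbrace
    (mem_iSup_zmultiples_aSeq_self ha)
  refine ⟨⟨hclosure ▸ hideal, hclosure⟩, fun htf => iSupIndep_of_sum_eq_zero ?_⟩
  exact fun w hw hsum => eq_zero_of_sum_eq_zero_of_mem_zmultiples_aSeq htf ha w hw hsum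
end

section
/- Let A be a left brace and let a ∈ A be such that a ⋆ a = 0. Then the subbrace generated by a together with ζ(⋆,A) equals ⟨a⟩ + ζ(⋆,A), and this subbrace is abelian (c ⋆ d = 0 for all its elements c, d). -/
/-!
Basic theory of left braces (skew left braces of abelian type), following
Dixon–Kurdachenko–Subbotin, "On the structure of braces whose subideals are ideals".
-/

universe u v

/-!
Write `x * y = x + λ_x(y)`. Then `λ_x` is additive, `x ↦ λ_x` is multiplicative, and
`z ∈ ζ(⋆,A)` means exactly that `λ_z = id` and `z` is fixed by every `λ_x`. The condition
`a ⋆ a = 0` says `λ_a(a) = a`, so every power `a ^ n` fixes `a` and `a ^ n = n • a`. Central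
summands pass through products, hence `(m • a + z) * (n • a + w) = (m + n) • a + (z + w)`: the
set `⟨a⟩ + ζ(⋆,A)` is a subbrace on which multiplication is addition.
-/

namespace LeftBrace

variable {A : Type u} [LeftBrace A]

theorem mul_zero_eq (a : A) : a * 0 = a := by
  have h := mul_add_eq a 0 0
  rw [add_zero] at h
  calc a * 0 = a * 0 + a * 0 - a - a * 0 + a := by abel
    _ = a := by rw [← h]; abel

theorem one_eq_zero : (1 : A) = 0 :=
  (mul_zero_eq (1 : A)).symm.trans (one_mul 0)

def lambda (a : A) : A →+ A where
  toFun x := a * x - a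
  map_zero' := by simp only [mul_zero_eq, sub_self]
  map_add' b c := by simp only [mul_add_eq]; abel

theorem lambda_apply (a x : A) : lambda a x = a * x - a := rfl

theorem mul_eq_add_lambda (a b : A) : a * b = a + lambda a b := by
  rw [lambda_apply]; abel

theorem bstar_eq_lambda_sub (a b : A) : bstar a b = lambda a b - b := by
  rw [bstar, lambda_apply]

theorem lambda_one (x : A) : lambda 1 x = x := by
  rw [lambda_apply, one_mul, one_eq_zero, sub_zero]

theorem lambda_mul (a b x : A) : lambda (a * b) x = lambda a (lambda b x) := by
  rw [lambda_apply b, map_sub, lambda_apply, lambda_apply, lambda_apply, mul_assoc]; abel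

theorem lambda_inv_lambda (a x : A) : lambda a⁻¹ (lambda a x) = x := by
  rw [← lambda_mul, inv_mul_cancel, lambda_one]

def lambdaStabilizer (b : A) : Subgroup A where
  carrier := {g | lambda g b = b}
  one_mem' := lambda_one b
  mul_mem' {g h} hg hh := by
    change lambda (g * h) b = b
    rw [lambda_mul, hh, hg]
  inv_mem' {g} hg := by
    change lambda g⁻¹ b = b
    conv_lhs => rw [← hg]
    exact lambda_inv_lambda g b

theorem mem_starCenter_iff {z : A} :
    z ∈ starCenter A ↔ (∀ x, lambda z x = x) ∧ ∀ x, lambda x z = z := by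
  simp only [starCenter, Set.mem_ofPred_eq, bstar_eq_lambda_sub, sub_eq_zero, forall_and]

theorem zero_mem_starCenter : (0 : A) ∈ starCenter A :=
  mem_starCenter_iff.mpr ⟨fun x => by rw [← one_eq_zero, lambda_one], fun x => map_zero _⟩

theorem add_mem_starCenter {z w : A} (hz : z ∈ starCenter A) (hw : w ∈ starCenter A) :
    z + w ∈ starCenter A := by
  rw [mem_starCenter_iff] at *
  have hzw : z + w = z * w := by rw [mul_eq_add_lambda, hz.1]
  refine ⟨fun x => ?_, fun x => ?_⟩
  · rw [hzw, lambda_mul, hw.1, hz.1]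
  · rw [map_add, hz.2, hw.2]

theorem neg_mem_starCenter {z : A} (hz : z ∈ starCenter A) : -z ∈ starCenter A := by
  rw [mem_starCenter_iff] at *
  have hinv : z⁻¹ = -z := by
    apply inv_eq_of_mul_eq_one_right
    rw [mul_eq_add_lambda, map_neg, hz.1, add_neg_cancel, one_eq_zero]
  refine ⟨fun x => ?_, fun x => ?_⟩
  · rw [← hinv]
    conv_lhs => rw [← hz.1 x]
    exact lambda_inv_lambda z x
  · rw [map_neg, hz.2]

theorem mul_add_of_mem_starCenter {z : A} (hz : z ∈ starCenter A) (x y : A) :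
    x * (y + z) = x * y + z := by
  rw [mul_add_eq, mul_eq_add_lambda x z, (mem_starCenter_iff.mp hz).2]; abel

theorem add_mul_of_mem_starCenter {z : A} (hz : z ∈ starCenter A) (x y : A) :
    (x + z) * y = x * y + z := by
  have hxz : x + z = x * z := by rw [mul_eq_add_lambda, (mem_starCenter_iff.mp hz).2]
  rw [hxz, mul_assoc, mul_eq_add_lambda z, (mem_starCenter_iff.mp hz).1, add_comm,
    mul_add_of_mem_starCenter hz]

theorem IsSubbrace.zsmul_mem {S : Set A} (hS : IsSubbrace S) {b : A} (hb : b ∈ S) (n : ℤ) :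
    n • b ∈ S :=
  hS.toAddSubgroup.zsmul_mem hb n

theorem isSubbrace_braceClosure (M : Set A) : IsSubbrace (braceClosure M) where
  zero_mem := Set.mem_sInter.mpr fun _ hS => hS.1.zero_mem
  add_mem ha hb := Set.mem_sInter.mpr fun S hS =>
    hS.1.add_mem (Set.mem_sInter.mp ha S hS) (Set.mem_sInter.mp hb S hS)
  neg_mem ha := Set.mem_sInter.mpr fun S hS => hS.1.neg_mem (Set.mem_sInter.mp ha S hS)
  mul_mem ha hb := Set.mem_sInter.mpr fun S hS =>
    hS.1.mul_mem (Set.mem_sInter.mp ha S hS) (Set.mem_sInter.mp hb S hS)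
  inv_mem ha := Set.mem_sInter.mpr fun S hS => hS.1.inv_mem (Set.mem_sInter.mp ha S hS)

theorem subset_braceClosure (M : Set A) : M ⊆ braceClosure M :=
  Set.subset_sInter fun _ hS => hS.2

theorem braceClosure_subset {M S : Set A} (hS : IsSubbrace S) (hMS : M ⊆ S) :
    braceClosure M ⊆ S :=
  Set.sInter_subset_of_mem ⟨hS, hMS⟩

def zmultiplesAddStarCenter (a : A) : Set A :=
  {x | ∃ n : ℤ, ∃ z ∈ starCenter A, x = n • a + z}

theorem singleton_union_starCenter_subset (a : A) :
    {a} ∪ starCenter A ⊆ zmultiplesAddStarCenter a := by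
  rintro x (rfl | hx)
  · exact ⟨1, 0, zero_mem_starCenter, by rw [one_zsmul, add_zero]⟩
  · exact ⟨0, x, hx, by rw [zero_zsmul, zero_add]⟩

theorem zmultiplesAddStarCenter_subset {a : A} {S : Set A} (hS : IsSubbrace S) (haS : a ∈ S)
    (hZS : starCenter A ⊆ S) : zmultiplesAddStarCenter a ⊆ S := by
  rintro x ⟨n, z, hz, rfl⟩
  exact hS.add_mem (hS.zsmul_mem haS n) (hZS hz)

section LambdaFixed

variable {a : A} (ha : lambda a a = a)
include ha

theorem zpow_eq_zsmul_of_lambda_self (n : ℤ) : a ^ n = n • a := by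
  have step : ∀ k : ℤ, a ^ (k + 1) = a ^ k + a := fun k => by
    have hfix : lambda (a ^ k) a = a := (lambdaStabilizer a).zpow_mem ha k
    rw [zpow_add_one, mul_eq_add_lambda, hfix]
  induction n using Int.induction_on with
  | zero => rw [zpow_zero, zero_zsmul, one_eq_zero]
  | succ i ih => rw [step, ih, add_one_zsmul]
  | pred i ih =>
    have h := step (-i - 1)
    rw [sub_add_cancel, ih] at h
    rw [sub_one_zsmul, eq_sub_of_add_eq h.symm, sub_eq_add_neg]

theorem zsmul_mul_zsmul_of_lambda_self (m n : ℤ) : (m • a) * (n • a) = (m + n) • a := by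
  rw [← zpow_eq_zsmul_of_lambda_self ha, ← zpow_eq_zsmul_of_lambda_self ha, ← zpow_add,
    zpow_eq_zsmul_of_lambda_self ha]

theorem zsmul_add_mul_zsmul_add {z w : A} (hz : z ∈ starCenter A) (hw : w ∈ starCenter A)
    (m n : ℤ) : (m • a + z) * (n • a + w) = (m + n) • a + (z + w) := by
  rw [add_mul_of_mem_starCenter hz, mul_add_of_mem_starCenter hw,
    zsmul_mul_zsmul_of_lambda_self ha]
  abel

theorem isSubbrace_zmultiplesAddStarCenter : IsSubbrace (zmultiplesAddStarCenter a) where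
  zero_mem := ⟨0, 0, zero_mem_starCenter, by rw [zero_zsmul, add_zero]⟩
  add_mem := by
    rintro _ _ ⟨m, z, hz, rfl⟩ ⟨n, w, hw, rfl⟩
    exact ⟨m + n, z + w, add_mem_starCenter hz hw, by rw [add_zsmul]; abel⟩
  neg_mem := by
    rintro _ ⟨n, z, hz, rfl⟩
    exact ⟨-n, -z, neg_mem_starCenter hz, by rw [neg_zsmul, neg_add]⟩
  mul_mem := by
    rintro _ _ ⟨m, z, hz, rfl⟩ ⟨n, w, hw, rfl⟩
    exact ⟨m + n, z + w, add_mem_starCenter hz hw, zsmul_add_mul_zsmul_add ha hz hw m n⟩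
  inv_mem := by
    rintro _ ⟨n, z, hz, rfl⟩
    refine ⟨-n, -z, neg_mem_starCenter hz, inv_eq_of_mul_eq_one_right ?_⟩
    rw [zsmul_add_mul_zsmul_add ha hz (neg_mem_starCenter hz), add_neg_cancel, add_neg_cancel,
      zero_zsmul, add_zero, one_eq_zero]

theorem bstar_eq_zero_of_mem_zmultiplesAddStarCenter {c d : A}
    (hc : c ∈ zmultiplesAddStarCenter a) (hd : d ∈ zmultiplesAddStarCenter a) :
    bstar c d = 0 := by
  obtain ⟨m, z, hz, rfl⟩ := hc
  obtain ⟨n, w, hw, rfl⟩ := hd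
  rw [bstar, zsmul_add_mul_zsmul_add ha hz hw, add_zsmul]
  abel

end LambdaFixed

end LeftBrace

open LeftBrace in
/-- **Lemma.** Let `A` be a left brace and `a ∈ A` with `a ⋆ a = 0`.  Then the subbrace
generated by `a` and `ζ(⋆,A)` equals `⟨a⟩ + ζ(⋆,A)`, and this subbrace is abelian. -/
theorem braceClosure_union_starCenter
    {A : Type u} [LeftBrace A] (a : A) (h : bstar a a = 0) :
    braceClosure ({a} ∪ starCenter A) =
        {x : A | ∃ n : ℤ, ∃ z ∈ starCenter A, x = n • a + z} ∧
      ∀ c ∈ braceClosure ({a} ∪ starCenter A),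
        ∀ d ∈ braceClosure ({a} ∪ starCenter A), bstar c d = 0 := by
  have ha : lambda a a = a := sub_eq_zero.mp ((bstar_eq_lambda_sub a a).symm.trans h)
  have hclosure : braceClosure ({a} ∪ starCenter A) = zmultiplesAddStarCenter a :=
    (braceClosure_subset (isSubbrace_zmultiplesAddStarCenter ha)
      (singleton_union_starCenter_subset a)).antisymm
      (zmultiplesAddStarCenter_subset (isSubbrace_braceClosure _)
        (subset_braceClosure _ (Or.inl rfl)) fun _ hz => subset_braceClosure _ (Or.inr hz))
  refine ⟨hclosure, ?_⟩
  rw [hclosure]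
  exact fun c hc d hd => bstar_eq_zero_of_mem_zmultiplesAddStarCenter ha hc hd
end
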